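/- arXiv:2102.01769 — 3 statements merged into one kernel-verified Lean document; each statement's English description precedes it below -/
import Mathlib

section
/- Let Θ¹, Θ², … be i.i.d. random R×L real matrices with common distribution μ satisfying ∫‖Θ‖_F μ(dΘ) < ∞. Assume that the population objective u(c) = ∫ u(Θ, c) μ(dΘ) has a unique minimizer c* over the collection F of nonempty sets of R×L matrices of cardinality at most K, and that inf{u(c) : c ∈ F} < inf{u(c) : c ∈ F, card(c) < K}. Let (M_n) be an increasing sequence of convex compact subsets of ℝ^{R×L} with ∪_n M_n = ℝ^{R×L}, and for each n let cⁿ be a set of cardinality at most K contained in M_n that minimizes the empirical objective u_n(c) = (1/n) Σ_{i=1}^n u(Θⁱ, c) over all such sets. Then, almost surely, cⁿ converges to c* in the Hausdorff metric. -/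
/-! Pollard's argument. Almost surely, by the strong law, empirical means converge for the
distance to every finite subset of a dense sequence and for the tails `‖y‖ 1{‖y‖ ≥ T}`. Since
`c ↦ infDist y c` is 1-Lipschitz for the Hausdorff distance, the first family upgrades to
uniform convergence of the empirical risk over configurations in any compact set.

The minimizers `cⁿ` eventually do at least as well as `c*` empirically, so one of their centers
stays bounded. A center far out could be dropped at the cost of a small tail term, leaving fewer
than `K` centers with risk below the separation level; hence all centers eventually lie in a
fixed ball. There uniform convergence drives the risk of `cⁿ` to the optimum, and compactness
of `K`-tuples turns near-optimality into Hausdorff-closeness to the unique minimizer `c*`. -/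

open MeasureTheory ProbabilityTheory Filter Metric

/-- `u(Θ, c) = min_{a ∈ c} ‖Θ − a‖_F`, where the space of R×L real matrices with the
Frobenius norm is modeled as `EuclideanSpace ℝ (Fin R × Fin L)`. -/
noncomputable def uPt {E : Type*} [NormedAddCommGroup E] (Θ : E) (c : Finset E)
    (hc : c.Nonempty) : ℝ :=
  c.inf' hc fun a => ‖Θ - a‖

open Set Topology TopologicalSpace

section EmpiricalMean

variable {E : Type*}

noncomputable def empMean (θ : ℕ → E) (n : ℕ) (f : E → ℝ) : ℝ :=
  (∑ i ∈ Finset.range n, f (θ i)) / n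

variable {θ : ℕ → E} {n : ℕ}

lemma empMean_mono {f g : E → ℝ} (h : ∀ y, f y ≤ g y) : empMean θ n f ≤ empMean θ n g :=
  div_le_div_of_nonneg_right (Finset.sum_le_sum fun i _ => h (θ i)) n.cast_nonneg

lemma empMean_add (f g : E → ℝ) :
    empMean θ n (fun y => f y + g y) = empMean θ n f + empMean θ n g := by
  simp only [empMean, Finset.sum_add_distrib, add_div]

lemma empMean_const_mul (a : ℝ) (f : E → ℝ) :
    empMean θ n (fun y => a * f y) = a * empMean θ n f := by
  simp only [empMean, ← Finset.mul_sum, mul_div_assoc]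

lemma empMean_const (hn : n ≠ 0) (a : ℝ) : empMean θ n (fun _ => a) = a := by
  simp [empMean, hn]

lemma abs_empMean_sub_empMean_le {f g : E → ℝ} {a : ℝ} (h : ∀ y, |f y - g y| ≤ a) :
    |empMean θ n f - empMean θ n g| ≤ a := by
  rcases eq_or_ne n 0 with rfl | hn
  · simpa [empMean] using (abs_nonneg _).trans (h (θ 0))
  have hle : ∀ f g : E → ℝ, (∀ y, f y ≤ g y + a) → empMean θ n f ≤ empMean θ n g + a :=
    fun f g h => (empMean_mono h).trans_eq (by rw [empMean_add, empMean_const hn])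
  refine abs_sub_le_iff.2 ⟨?_, ?_⟩
  · linarith [hle f g fun y => by linarith [(abs_sub_le_iff.1 (h y)).1]]
  · linarith [hle g f fun y => by linarith [(abs_sub_le_iff.1 (h y)).2]]

end EmpiricalMean

lemma uPt_eq_infDist {E : Type*} [NormedAddCommGroup E] (θ : E) (c : Finset E)
    (hc : c.Nonempty) : uPt θ c hc = infDist θ c := by
  obtain ⟨a, ha, hθa⟩ := c.exists_mem_eq_inf' hc fun a => ‖θ - a‖
  refine le_antisymm ?_ ?_
  · exact (le_infDist (Finset.coe_nonempty.2 hc)).2 fun b hb => by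
      rw [dist_eq_norm]; exact Finset.inf'_le _ hb
  · rw [uPt, hθa, ← dist_eq_norm]; exact infDist_le_dist_of_mem ha

section Risk

variable {E : Type*} [NormedAddCommGroup E]

noncomputable def empRisk (θ : ℕ → E) (n : ℕ) (s : Set E) : ℝ :=
  empMean θ n (infDist · s)

noncomputable def risk [MeasurableSpace E] (μ : Measure E) (s : Set E) : ℝ :=
  ∫ y, infDist y s ∂μ

lemma Set.Finite.hausdorffEDist_ne_top {s t : Set E} (hs : s.Finite) (ht : t.Finite)
    (hs' : s.Nonempty) (ht' : t.Nonempty) : hausdorffEDist s t ≠ ⊤ :=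
  hausdorffEDist_ne_top_of_nonempty_of_bounded hs' ht' hs.isBounded ht.isBounded

lemma abs_infDist_sub_infDist_le_hausdorffDist {s t : Set E} (h : hausdorffEDist s t ≠ ⊤)
    (y : E) : |infDist y s - infDist y t| ≤ hausdorffDist s t := by
  have h' : hausdorffEDist t s ≠ ⊤ := by rwa [hausdorffEDist_comm]
  have hst := infDist_le_infDist_add_hausdorffDist (x := y) h
  have hts := infDist_le_infDist_add_hausdorffDist (x := y) h'
  rw [hausdorffDist_comm] at hts
  exact abs_sub_le_iff.2 ⟨by linarith, by linarith⟩

lemma abs_empRisk_sub_empRisk_le {s t : Set E} (h : hausdorffEDist s t ≠ ⊤) (θ : ℕ → E)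
    (n : ℕ) : |empRisk θ n s - empRisk θ n t| ≤ hausdorffDist s t :=
  abs_empMean_sub_empMean_le (abs_infDist_sub_infDist_le_hausdorffDist h)

variable [MeasurableSpace E] [OpensMeasurableSpace E] {μ : Measure E}

lemma integrable_infDist (hint : Integrable (fun y => ‖y‖) μ) [IsFiniteMeasure μ]
    (s : Set E) : Integrable (fun y => infDist y s) μ := by
  refine (hint.add (integrable_const (infDist 0 s))).mono'
    (continuous_infDist_pt s).aestronglyMeasurable (ae_of_all _ fun y => ?_)
  rw [Real.norm_of_nonneg infDist_nonneg, Pi.add_apply, add_comm, ← dist_zero_right]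
  exact infDist_le_infDist_add_dist

lemma abs_risk_sub_risk_le [IsProbabilityMeasure μ] (hint : Integrable (fun y => ‖y‖) μ)
    {s t : Set E} (h : hausdorffEDist s t ≠ ⊤) : |risk μ s - risk μ t| ≤ hausdorffDist s t := by
  rw [risk, risk, ← integral_sub (integrable_infDist hint s) (integrable_infDist hint t)]
  simpa using norm_integral_le_of_norm_le_const (μ := μ)
    (ae_of_all _ fun y =>
      (Real.norm_eq_abs _).trans_le (abs_infDist_sub_infDist_le_hausdorffDist h y))

end Risk

section Uniform

variable {E : Type*} [NormedAddCommGroup E] [MeasurableSpace E] [OpensMeasurableSpace E]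
  {μ : Measure E} [IsProbabilityMeasure μ]

/-- Pointwise convergence on the finite subsets of a dense sequence upgrades to uniform
convergence over the finite subsets of a compact set: such a set is within `δ` in the Hausdorff
distance of a subset of a finite `δ`-net taken from the sequence. -/
theorem tendstoUniformlyOn_empRisk (hint : Integrable (fun y => ‖y‖) μ) {x : ℕ → E}
    (hx : DenseRange x) {θ : ℕ → E}
    (hconv : ∀ s : Finset ℕ,
      Tendsto (fun n => empRisk θ n (x '' s)) atTop (𝓝 (risk μ (x '' s))))
    {S : Set E} (hS : IsCompact S) :
    TendstoUniformlyOn (fun n (c : Finset E) => empRisk θ n c) (fun c => risk μ c) atTop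
      {c | c.Nonempty ∧ ↑c ⊆ S} := by
  classical
  rw [Metric.tendstoUniformlyOn_iff]
  intro ε hε
  obtain ⟨t, hSt⟩ := hS.elim_finite_subcover (fun i => ball (x i) (ε / 3))
    (fun _ => isOpen_ball) fun y _ => mem_iUnion.2 (hx.exists_dist_lt y (by positivity))
  have hnet : ∀ᶠ n in atTop, ∀ s ∈ t.powerset,
      dist (risk μ (x '' s)) (empRisk θ n (x '' s)) < ε / 3 :=
    (eventually_all_finset _).2 fun s _ =>
      ((hconv s).eventually (ball_mem_nhds _ (by positivity : 0 < ε / 3))).mono fun n hn => by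
        rwa [dist_comm] at hn
  filter_upwards [hnet] with n hn c ⟨hc, hcS⟩
  set s := t.filter fun i => ∃ a ∈ c, dist a (x i) < ε / 3
  have hnear : ∀ a ∈ c, ∃ i ∈ s, dist a (x i) < ε / 3 := fun a ha => by
    obtain ⟨i, hi, hai⟩ := mem_iUnion₂.1 (hSt (hcS ha))
    exact ⟨i, Finset.mem_filter.2 ⟨hi, a, ha, hai⟩, hai⟩
  have hs : (x '' s).Nonempty := by
    obtain ⟨a, ha⟩ := hc
    obtain ⟨i, hi, -⟩ := hnear a ha
    exact ⟨x i, i, hi, rfl⟩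
  have hfin : hausdorffEDist (c : Set E) (x '' s) ≠ ⊤ :=
    c.finite_toSet.hausdorffEDist_ne_top (s.finite_toSet.image x) (Finset.coe_nonempty.2 hc) hs
  have hdist : hausdorffDist (c : Set E) (x '' s) ≤ ε / 3 := by
    refine hausdorffDist_le_of_mem_dist (by positivity) (fun a ha => ?_) ?_
    · obtain ⟨i, hi, hai⟩ := hnear a ha
      exact ⟨x i, ⟨i, hi, rfl⟩, hai.le⟩
    · rintro _ ⟨i, hi, rfl⟩
      obtain ⟨-, a, ha, hai⟩ := Finset.mem_filter.1 hi
      exact ⟨a, ha, (dist_comm a _ ▸ hai).le⟩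
  have hrisk := abs_risk_sub_risk_le hint hfin
  have hemp := abs_empRisk_sub_empRisk_le hfin θ n
  have hs_net := hn s (Finset.mem_powerset.2 (Finset.filter_subset _ _))
  rw [Real.dist_eq] at hs_net ⊢
  rw [abs_sub_lt_iff] at hs_net ⊢
  rw [abs_sub_le_iff] at hrisk hemp
  constructor <;> linarith

end Uniform

section Localization

variable {E : Type*} [NormedAddCommGroup E]

theorem eventually_exists_norm_le {θ : ℕ → E} {a : ℝ}
    (hnorm : Tendsto (fun n => empMean θ n (‖·‖)) atTop (𝓝 a)) {cn : ℕ → Finset E}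
    (hcn : ∀ n, (cn n).Nonempty) {V : ℝ} (hV : ∀ᶠ n in atTop, empRisk θ n (cn n) ≤ V) :
    ∀ᶠ n in atTop, ∃ b ∈ cn n, ‖b‖ ≤ V + a + 1 := by
  filter_upwards [hV, hnorm.eventually (gt_mem_nhds (lt_add_one a)), eventually_ne_atTop 0]
    with n hVn hn hn0
  obtain ⟨b, hb, hdist⟩ := (cn n).finite_toSet.isCompact.exists_infDist_eq_dist
    (Finset.coe_nonempty.2 (hcn n)) 0
  have hle : infDist 0 (cn n : Set E) ≤ empRisk θ n (cn n) + empMean θ n (‖·‖) := by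
    rw [empRisk, ← empMean_add, ← empMean_const hn0 (infDist 0 (cn n : Set E))]
    exact empMean_mono fun y => by
      simpa [dist_zero_left] using infDist_le_infDist_add_dist (x := (0 : E)) (y := y)
  exact ⟨b, hb, by rw [← dist_zero_left, ← hdist]; linarith⟩

noncomputable def normTail (T : ℝ) : E → ℝ :=
  {y | T ≤ ‖y‖}.indicator (‖·‖)

lemma measurable_normTail [MeasurableSpace E] [OpensMeasurableSpace E] (T : ℝ) :
    Measurable (normTail (E := E) T) :=
  measurable_norm.indicator (measurableSet_le measurable_const measurable_norm)

lemma integrable_normTail [MeasurableSpace E] [OpensMeasurableSpace E] {μ : Measure E}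
    (hint : Integrable (fun y => ‖y‖) μ) (T : ℝ) : Integrable (normTail T) μ :=
  hint.indicator (measurableSet_le measurable_const measurable_norm)

lemma tendsto_integral_normTail [MeasurableSpace E] [OpensMeasurableSpace E] {μ : Measure E}
    (hint : Integrable (fun y => ‖y‖) μ) :
    Tendsto (fun T : ℕ => ∫ y, normTail T y ∂μ) atTop (𝓝 0) := by
  have hmeas (T : ℕ) : MeasurableSet {y : E | (T : ℝ) ≤ ‖y‖} :=
    measurableSet_le measurable_const measurable_norm
  have hanti : Antitone fun T : ℕ => {y : E | (T : ℝ) ≤ ‖y‖} :=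
    fun S T hST y (hy : (T : ℝ) ≤ ‖y‖) => show (S : ℝ) ≤ ‖y‖ from (Nat.cast_le.2 hST).trans hy
  have hempty : ⋂ T : ℕ, {y : E | (T : ℝ) ≤ ‖y‖} = ∅ :=
    eq_empty_of_forall_notMem fun y hy =>
      (exists_nat_gt ‖y‖).elim fun T hT => (mem_iInter.1 hy T).not_gt hT
  have h := tendsto_setIntegral_of_antitone hmeas hanti ⟨0, hint.integrableOn⟩
  rw [hempty, setIntegral_empty] at h
  exact h.congr fun T => (integral_indicator (hmeas T)).symm

/-- Dropping the centers of norm above `2T + R` only costs on the tail `‖y‖ ≥ T`: a point `y`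
with `‖y‖ < T` is closer to a center of norm `≤ R` than to any of them. -/
lemma infDist_filter_le_add_normTail {c : Finset E} {a₀ : E} (ha₀ : a₀ ∈ c) {R T : ℝ}
    (ha₀R : ‖a₀‖ ≤ R) (hT : 1 ≤ T) (y : E) :
    infDist y ↑(c.filter (‖·‖ ≤ 2 * T + R)) ≤ infDist y c + (R + 1) * normTail T y := by
  have ha₀' : a₀ ∈ c.filter (‖·‖ ≤ 2 * T + R) :=
    Finset.mem_filter.2 ⟨ha₀, by linarith⟩
  have hy_a₀ : dist y a₀ ≤ ‖y‖ + R := by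
    rw [dist_eq_norm]; linarith [norm_sub_le y a₀]
  by_cases hy : T ≤ ‖y‖
  · rw [normTail, indicator_of_mem (show y ∈ {z : E | T ≤ ‖z‖} from hy)]
    have hR : 0 ≤ R := (norm_nonneg a₀).trans ha₀R
    nlinarith [infDist_le_dist_of_mem (x := y) (Finset.mem_coe.2 ha₀'),
      infDist_nonneg (x := y) (s := (c : Set E))]
  · rw [normTail, indicator_of_notMem (show y ∉ {z : E | T ≤ ‖z‖} from hy), mul_zero, add_zero]
    obtain ⟨b, hb, hyb⟩ := c.finite_toSet.isCompact.exists_infDist_eq_dist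
      (Finset.coe_nonempty.2 ⟨a₀, ha₀⟩) y
    have hb' : b ∈ c.filter (‖·‖ ≤ 2 * T + R) := by
      refine Finset.mem_filter.2 ⟨hb, ?_⟩
      have : dist y b ≤ dist y a₀ := hyb ▸ infDist_le_dist_of_mem (Finset.mem_coe.2 ha₀)
      have : ‖b‖ - ‖y‖ ≤ dist y b := by
        rw [dist_eq_norm, norm_sub_rev]; exact norm_sub_norm_le b y
      linarith
    exact hyb ▸ infDist_le_dist_of_mem (Finset.mem_coe.2 hb')

end Localization

section Boundedness

variable {E : Type*} [NormedAddCommGroup E] [ProperSpace E] [MeasurableSpace E]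
  [OpensMeasurableSpace E] {μ : Measure E}

theorem exists_eventually_subset_closedBall (hint : Integrable (fun y => ‖y‖) μ)
    {θ : ℕ → E}
    (hunif : ∀ S : Set E, IsCompact S → TendstoUniformlyOn
      (fun n (c : Finset E) => empRisk θ n c) (fun c => risk μ c) atTop {c | c.Nonempty ∧ ↑c ⊆ S})
    (htail : ∀ T : ℕ,
      Tendsto (fun n => empMean θ n (normTail T)) atTop (𝓝 (∫ y, normTail T y ∂μ)))
    {K : ℕ} {u m : ℝ} (hum : u < m)
    (hsep : ∀ c : Finset E, c.Nonempty → c.card < K → m ≤ risk μ c)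
    {cn : ℕ → Finset E} (hcard : ∀ n, (cn n).card ≤ K) {R : ℝ}
    (hnear : ∀ᶠ n in atTop, ∃ a ∈ cn n, ‖a‖ ≤ R)
    (hopt : ∀ ε > 0, ∀ᶠ n in atTop, empRisk θ n (cn n) < u + ε) :
    ∃ r, ∀ᶠ n in atTop, ↑(cn n) ⊆ closedBall (0 : E) r := by
  obtain ⟨ε, hε, hεm⟩ : ∃ ε, 0 < ε ∧ u + 3 * ε = m := ⟨(m - u) / 3, by linarith, by ring⟩
  have hlim : Tendsto (fun T : ℕ => (R + 1) * ∫ y, normTail T y ∂μ) atTop (𝓝 0) := by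
    simpa using (tendsto_integral_normTail hint).const_mul (R + 1)
  obtain ⟨T, hT1, hTε⟩ := ((eventually_ge_atTop 1).and (hlim.eventually (gt_mem_nhds hε))).exists
  have hT : (1 : ℝ) ≤ T := Nat.one_le_cast.2 hT1
  refine ⟨2 * T + R, ?_⟩
  filter_upwards [hnear, hopt ε hε,
    ((htail T).const_mul (R + 1)).eventually (gt_mem_nhds hTε),
    Metric.tendstoUniformlyOn_iff.1 (hunif _ (isCompact_closedBall 0 (2 * T + R))) ε hε]
    with n ⟨a₀, ha₀, ha₀R⟩ hopt_n htail_n hunif_n b hb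
  rw [mem_closedBall, dist_zero_right]
  by_contra hbr
  set c := (cn n).filter (‖·‖ ≤ 2 * T + R)
  have hc : c.Nonempty := ⟨a₀, Finset.mem_filter.2 ⟨ha₀, by linarith⟩⟩
  have hcK : c.card < K :=
    (Finset.card_lt_card (Finset.filter_ssubset.2 ⟨b, hb, hbr⟩)).trans_le (hcard n)
  have hcS : ↑c ⊆ closedBall (0 : E) (2 * T + R) := fun a ha => by
    rw [mem_closedBall, dist_zero_right]; exact (Finset.mem_filter.1 ha).2
  have hemp : empRisk θ n c ≤ empRisk θ n (cn n) + (R + 1) * empMean θ n (normTail T) := by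
    rw [empRisk, empRisk, ← empMean_const_mul, ← empMean_add]
    exact empMean_mono (infDist_filter_le_add_normTail ha₀ ha₀R hT)
  have hrisk := hunif_n c ⟨hc, hcS⟩
  rw [Real.dist_eq, abs_sub_lt_iff] at hrisk
  linarith [hsep c hc hcK, hrisk.1]

end Boundedness

lemma exists_fin_range_eq {E : Type*} {c : Finset E} (hc : c.Nonempty) {K : ℕ} (hK : c.card ≤ K) :
    ∃ x : Fin K → E, range x = c := by
  have : Nonempty c := hc.coe_sort
  let e : c ↪ Fin K := c.equivFin.toEmbedding.trans (Fin.castLEEmb hK)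
  refine ⟨Subtype.val ∘ Function.invFun e, ?_⟩
  rw [range_comp, (Function.invFun_surjective e.injective).range_eq, image_univ,
    Subtype.range_coe]

section Stability

variable {E : Type*} [NormedAddCommGroup E] {ι : Type*} [Fintype ι]

lemma hausdorffDist_range_le_dist (x y : ι → E) :
    hausdorffDist (range x) (range y) ≤ dist x y :=
  hausdorffDist_le_of_mem_dist dist_nonneg
    (fun _ ⟨i, hi⟩ => ⟨y i, mem_range_self i, hi ▸ dist_le_pi_dist x y i⟩)
    (fun _ ⟨i, hi⟩ => ⟨x i, mem_range_self i, hi ▸ dist_comm (x i) (y i) ▸ dist_le_pi_dist x y i⟩)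

variable [Nonempty ι]

lemma hausdorffEDist_range_range_ne_top (x y : ι → E) : hausdorffEDist (range x) (range y) ≠ ⊤ :=
  (finite_range x).hausdorffEDist_ne_top (finite_range y) (range_nonempty x) (range_nonempty y)

lemma continuous_hausdorffDist_range (t : Set E) :
    Continuous fun x : ι → E => hausdorffDist (range x) t := by
  refine (LipschitzWith.of_dist_le_mul fun x y => ?_).continuous (K := 1)
  have hxy := hausdorffDist_triangle (u := t) (hausdorffEDist_range_range_ne_top x y)
  have hyx := hausdorffDist_triangle (u := t) (hausdorffEDist_range_range_ne_top y x)
  rw [hausdorffDist_comm (s := range y) (t := range x)] at hyx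
  rw [NNReal.coe_one, one_mul, Real.dist_eq, abs_sub_le_iff]
  constructor <;> linarith [hausdorffDist_range_le_dist x y]

lemma continuous_risk_range [MeasurableSpace E] [OpensMeasurableSpace E] {μ : Measure E}
    [IsProbabilityMeasure μ] (hint : Integrable (fun y => ‖y‖) μ) :
    Continuous fun x : ι → E => risk μ (range x) :=
  (LipschitzWith.of_dist_le_mul fun x y => by
    rw [NNReal.coe_one, one_mul, Real.dist_eq]
    exact (abs_risk_sub_risk_le hint (hausdorffEDist_range_range_ne_top x y)).trans
      (hausdorffDist_range_le_dist x y)).continuous (K := 1)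

end Stability

/-- The `K`-tuples in the ball at Hausdorff distance `≥ ε` from `cstar` form a compact set, on
which the continuous risk attains its minimum; by uniqueness that minimum exceeds the optimum. -/
theorem exists_pos_hausdorffDist_lt_of_risk_lt {E : Type*} [NormedAddCommGroup E] [ProperSpace E]
    [MeasurableSpace E] [OpensMeasurableSpace E] {μ : Measure E} [IsProbabilityMeasure μ]
    (hint : Integrable (fun y => ‖y‖) μ) {K : ℕ} {cstar : Finset E} (hne : cstar.Nonempty)
    (hcard : cstar.card ≤ K)
    (hmin : ∀ c : Finset E, c.Nonempty → c.card ≤ K → risk μ cstar ≤ risk μ c)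
    (huniq : ∀ c : Finset E, c.Nonempty → c.card ≤ K →
      (∀ c' : Finset E, c'.Nonempty → c'.card ≤ K → risk μ c ≤ risk μ c') → c = cstar)
    (r : ℝ) {ε : ℝ} (hε : 0 < ε) :
    ∃ δ > 0, ∀ c : Finset E, c.Nonempty → c.card ≤ K → ↑c ⊆ closedBall (0 : E) r →
      risk μ c < risk μ cstar + δ → hausdorffDist (c : Set E) cstar < ε := by
  classical
  have : Nonempty (Fin K) := ⟨⟨0, hne.card_pos.trans_le hcard⟩⟩
  set S := (univ.pi fun _ : Fin K => closedBall (0 : E) r) ∩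
    {x | ε ≤ hausdorffDist (range x) cstar}
  have hS : IsCompact S := (isCompact_univ_pi fun _ => isCompact_closedBall 0 r).inter_right
    (isClosed_le continuous_const (continuous_hausdorffDist_range _))
  have hmemS (c : Finset E) (hc : c.Nonempty) (hcK : c.card ≤ K)
      (hcr : ↑c ⊆ closedBall (0 : E) r) (hcε : ε ≤ hausdorffDist (c : Set E) cstar) :
      ∃ x ∈ S, range x = c := by
    obtain ⟨x, hx⟩ := exists_fin_range_eq hc hcK
    refine ⟨x, ⟨fun i _ => hcr (hx ▸ mem_range_self i), ?_⟩, hx⟩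
    rwa [mem_ofPred_eq, hx]
  rcases S.eq_empty_or_nonempty with hSe | hSne
  · refine ⟨1, one_pos, fun c hc hcK hcr _ => not_le.1 fun hcε => ?_⟩
    obtain ⟨x, hxS, -⟩ := hmemS c hc hcK hcr hcε
    exact hSe.subset hxS
  obtain ⟨x₀, hx₀S, hx₀⟩ := hS.exists_isMinOn hSne (continuous_risk_range hint).continuousOn
  refine ⟨risk μ (range x₀) - risk μ cstar, sub_pos.2 (lt_of_not_ge fun hle => ?_),
    fun c hc hcK hcr hcδ => not_le.1 fun hcε => ?_⟩
  · have hx₀c : ((Finset.univ.image x₀ : Finset E) : Set E) = range x₀ := by simp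
    have hc₀ := huniq (Finset.univ.image x₀) (Finset.univ_nonempty.image x₀)
      (Finset.card_image_le.trans (by simp)) fun c' hc' hc'K => hx₀c ▸ hle.trans (hmin c' hc' hc'K)
    have h := hx₀S.2
    rw [mem_ofPred_eq, ← hx₀c, hc₀, hausdorffDist_self_zero] at h
    linarith
  · obtain ⟨x, hxS, hx⟩ := hmemS c hc hcK hcr hcε
    have hx₀x : risk μ (range x₀) ≤ risk μ (range x) := hx₀ hxS
    rw [hx] at hx₀x
    linarith

theorem tendsto_hausdorffDist_of_empRisk_le {E : Type*} [NormedAddCommGroup E] [ProperSpace E]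
    [MeasurableSpace E] [OpensMeasurableSpace E] {μ : Measure E} [IsProbabilityMeasure μ]
    (hint : Integrable (fun y => ‖y‖) μ) {K : ℕ} {cstar : Finset E} (hne : cstar.Nonempty)
    (hcard : cstar.card ≤ K)
    (hmin : ∀ c : Finset E, c.Nonempty → c.card ≤ K → risk μ cstar ≤ risk μ c)
    (huniq : ∀ c : Finset E, c.Nonempty → c.card ≤ K →
      (∀ c' : Finset E, c'.Nonempty → c'.card ≤ K → risk μ c ≤ risk μ c') → c = cstar)
    {m : ℝ} (hm : risk μ cstar < m)
    (hsep : ∀ c : Finset E, c.Nonempty → c.card < K → m ≤ risk μ c) {θ : ℕ → E}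
    (hunif : ∀ S : Set E, IsCompact S → TendstoUniformlyOn
      (fun n (c : Finset E) => empRisk θ n c) (fun c => risk μ c) atTop {c | c.Nonempty ∧ ↑c ⊆ S})
    (htail : ∀ T : ℕ,
      Tendsto (fun n => empMean θ n (normTail T)) atTop (𝓝 (∫ y, normTail T y ∂μ)))
    {cn : ℕ → Finset E} (hcn_ne : ∀ n, (cn n).Nonempty) (hcn_card : ∀ n, (cn n).card ≤ K)
    (hcn_min : ∀ᶠ n in atTop, empRisk θ n (cn n) ≤ empRisk θ n cstar) :
    Tendsto (fun n => hausdorffDist (cn n : Set E) cstar) atTop (𝓝 0) := by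
  have hopt : ∀ ε > 0, ∀ᶠ n in atTop, empRisk θ n (cn n) < risk μ cstar + ε := fun ε hε => by
    have hstar := (hunif _ cstar.finite_toSet.isCompact).tendsto_at ⟨hne, subset_rfl⟩
    filter_upwards [hcn_min, hstar.eventually (gt_mem_nhds (lt_add_of_pos_right _ hε))]
      with n hn hstar_n using hn.trans_lt hstar_n
  have hnorm : Tendsto (fun n => empMean θ n (‖·‖)) atTop (𝓝 (∫ y, ‖y‖ ∂μ)) := by
    simpa [empRisk, risk, infDist_singleton] using
      (hunif {0} isCompact_singleton).tendsto_at (x := ({0} : Finset E)) ⟨by simp, by simp⟩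
  obtain ⟨r, hr⟩ := exists_eventually_subset_closedBall hint hunif htail hm hsep hcn_card
    (eventually_exists_norm_le hnorm hcn_ne ((hopt 1 one_pos).mono fun _ h => h.le)) hopt
  have hrisk : ∀ ε > 0, ∀ᶠ n in atTop, risk μ (cn n) < risk μ cstar + ε := fun ε hε => by
    filter_upwards [hr, hopt (ε / 2) (half_pos hε), Metric.tendstoUniformlyOn_iff.1
      (hunif _ (isCompact_closedBall 0 r)) (ε / 2) (half_pos hε)] with n hsub hopt_n hunif_n
    have h := hunif_n (cn n) ⟨hcn_ne n, hsub⟩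
    rw [Real.dist_eq, abs_sub_lt_iff] at h
    linarith [h.1]
  refine tendsto_order.2 ⟨fun a ha => .of_forall fun n => ha.trans_le hausdorffDist_nonneg,
    fun ε hε => ?_⟩
  obtain ⟨δ, hδ, hδε⟩ := exists_pos_hausdorffDist_lt_of_risk_lt hint hne hcard hmin huniq r hε
  filter_upwards [hr, hrisk δ hδ] with n hsub hrisk_n
    using hδε (cn n) (hcn_ne n) (hcn_card n) hsub hrisk_n

theorem ae_tendsto_empMean {Ω E : Type*} [MeasurableSpace Ω] {P : Measure Ω} [MeasurableSpace E]
    {μ : Measure E} {Θ : ℕ → Ω → E} (hmeas : ∀ i, Measurable (Θ i)) (hindep : iIndepFun Θ P)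
    (hlaw : ∀ i, P.map (Θ i) = μ) {f : E → ℝ} (hf : Measurable f) (hfi : Integrable f μ) :
    ∀ᵐ ω ∂P, Tendsto (fun n => empMean (Θ · ω) n f) atTop (𝓝 (∫ y, f y ∂μ)) := by
  have hident (i : ℕ) : IdentDistrib (Θ i) (Θ 0) P P :=
    ⟨(hmeas i).aemeasurable, (hmeas 0).aemeasurable, by rw [hlaw, hlaw]⟩
  rw [← hlaw 0] at hfi ⊢
  have hmean : ∫ ω, f (Θ 0 ω) ∂P = ∫ y, f y ∂P.map (Θ 0) :=
    (integral_map (hmeas 0).aemeasurable hfi.aestronglyMeasurable).symm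
  simpa [empMean, hmean] using strong_law_ae_real (fun i ω => f (Θ i ω))
    (hfi.comp_measurable (hmeas 0)) (fun i j hij => (hindep.indepFun hij).comp hf hf)
    fun i => (hident i).comp hf

lemma eventually_subset_of_monotone_of_iUnion_eq_univ {E : Type*} {M : ℕ → Set E}
    (hM : Monotone M) (hcover : ⋃ n, M n = univ) (s : Finset E) :
    ∀ᶠ n in atTop, ↑s ⊆ M n :=
  ((eventually_all_finset s).2 fun a _ => by
    obtain ⟨k, hk⟩ := mem_iUnion.1 (hcover.symm ▸ mem_univ a : a ∈ ⋃ n, M n)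
    exact (eventually_ge_atTop k).mono fun n hn => hM hn hk).mono fun _ h a ha => h a ha

theorem kmeans_strong_consistency_general (R L K : ℕ)
    {Ω : Type*} [MeasurableSpace Ω] (P : Measure Ω)
    (μ : Measure (EuclideanSpace ℝ (Fin R × Fin L))) [IsProbabilityMeasure μ]
    (Θ : ℕ → Ω → EuclideanSpace ℝ (Fin R × Fin L))
    (hmeas : ∀ i, Measurable (Θ i))
    (hindep : iIndepFun Θ P)
    (hlaw : ∀ i, Measure.map (Θ i) P = μ)
    (hint : Integrable (fun θ => ‖θ‖) μ)
    -- c* is the unique minimizer of the population objective over F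
    (cstar : Finset (EuclideanSpace ℝ (Fin R × Fin L)))
    (hcstar_ne : cstar.Nonempty) (hcstar_card : cstar.card ≤ K)
    (hmin : ∀ (c : Finset (EuclideanSpace ℝ (Fin R × Fin L))) (hc : c.Nonempty),
      c.card ≤ K → (∫ θ, uPt θ cstar hcstar_ne ∂μ) ≤ ∫ θ, uPt θ c hc ∂μ)
    (huniq : ∀ (c : Finset (EuclideanSpace ℝ (Fin R × Fin L))) (hc : c.Nonempty),
      c.card ≤ K →
      (∀ (c' : Finset (EuclideanSpace ℝ (Fin R × Fin L))) (hc' : c'.Nonempty),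
        c'.card ≤ K → (∫ θ, uPt θ c hc ∂μ) ≤ ∫ θ, uPt θ c' hc' ∂μ) →
      c = cstar)
    -- separation: inf over card ≤ K is strictly below inf over card < K
    (hsep : (∫ θ, uPt θ cstar hcstar_ne ∂μ) <
      sInf {x : ℝ | ∃ (c : Finset (EuclideanSpace ℝ (Fin R × Fin L))) (hc : c.Nonempty),
        c.card < K ∧ x = ∫ θ, uPt θ c hc ∂μ})
    -- increasing sequence of convex compact sets covering the whole space
    (M : ℕ → Set (EuclideanSpace ℝ (Fin R × Fin L)))
    (hMmono : Monotone M)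
    (hMcover : (⋃ n, M n) = Set.univ)
    -- cⁿ minimizes the empirical objective over sets of ≤ K points inside M_n
    (cn : ℕ → Ω → Finset (EuclideanSpace ℝ (Fin R × Fin L)))
    (hcn_ne : ∀ n ω, (cn n ω).Nonempty)
    (hcn_card : ∀ n ω, (cn n ω).card ≤ K)
    (hcn_min : ∀ n ω (c : Finset (EuclideanSpace ℝ (Fin R × Fin L))) (hc : c.Nonempty),
      c.card ≤ K → ↑c ⊆ M n →
      (∑ i ∈ Finset.range n, uPt (Θ i ω) (cn n ω) (hcn_ne n ω)) / n ≤
        (∑ i ∈ Finset.range n, uPt (Θ i ω) c hc) / n) :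
    ∀ᵐ ω ∂P, Tendsto (fun n => hausdorffDist (↑(cn n ω) : Set (EuclideanSpace ℝ (Fin R × Fin L))) ↑cstar)
      atTop (nhds 0) := by
  simp only [uPt_eq_infDist] at hmin huniq hsep hcn_min
  obtain ⟨m, hm, hsep'⟩ : ∃ m, risk μ cstar < m ∧
      ∀ c : Finset (EuclideanSpace ℝ (Fin R × Fin L)), c.Nonempty → c.card < K → m ≤ risk μ c :=
    ⟨_, hsep, fun c hc hcK => csInf_le
      ⟨0, fun _ ⟨_, _, _, h⟩ => h ▸ integral_nonneg fun _ => infDist_nonneg⟩ ⟨c, hc, hcK, rfl⟩⟩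
  have hdense := denseRange_denseSeq (EuclideanSpace ℝ (Fin R × Fin L))
  filter_upwards [ae_all_iff.2 fun s : Finset ℕ => ae_tendsto_empMean hmeas hindep hlaw
      (continuous_infDist_pt _).measurable (integrable_infDist hint (denseSeq _ '' s)),
    ae_all_iff.2 fun T : ℕ => ae_tendsto_empMean hmeas hindep hlaw
      (measurable_normTail T) (integrable_normTail hint T)] with ω hconv htail
  exact tendsto_hausdorffDist_of_empRisk_le hint hcstar_ne hcstar_card hmin huniq hm hsep'
    (fun _ hS => tendstoUniformlyOn_empRisk hint hdense hconv hS) htail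
    (hcn_ne · ω) (hcn_card · ω)
    ((eventually_subset_of_monotone_of_iUnion_eq_univ hMmono hMcover cstar).mono
      fun n hn => hcn_min n ω cstar hcstar_ne hcstar_card hn)

/-- strong consistency of the k-means algorithm on B-spline coefficient
matrices: Θ¹, Θ², … i.i.d. random R×L matrices with law μ, ∫‖Θ‖_F dμ < ∞; the population
objective `u(c) = ∫ u(Θ,c) dμ` has a unique minimizer c* over the nonempty sets of at most
K matrices; `inf{u(c) : card c ≤ K} < inf{u(c) : card c < K}`; (M_n) is an increasing
sequence of convex compact sets covering ℝ^{R×L}; and cⁿ ⊆ M_n (card ≤ K, depending on ω)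
minimizes the empirical objective `u_n(c) = (1/n) Σ_{i≤n} u(Θⁱ, c)` among such sets.
Then, almost surely, cⁿ → c* in the Hausdorff metric. -/
theorem kmeans_strong_consistency (R L K : ℕ) (hK : 0 < K)
    {Ω : Type*} [MeasurableSpace Ω] (P : Measure Ω) [IsProbabilityMeasure P]
    (μ : Measure (EuclideanSpace ℝ (Fin R × Fin L))) [IsProbabilityMeasure μ]
    (Θ : ℕ → Ω → EuclideanSpace ℝ (Fin R × Fin L))
    (hmeas : ∀ i, Measurable (Θ i))
    (hindep : iIndepFun Θ P)
    (hlaw : ∀ i, Measure.map (Θ i) P = μ)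
    (hint : Integrable (fun θ => ‖θ‖) μ)
    -- c* is the unique minimizer of the population objective over F
    (cstar : Finset (EuclideanSpace ℝ (Fin R × Fin L)))
    (hcstar_ne : cstar.Nonempty) (hcstar_card : cstar.card ≤ K)
    (hmin : ∀ (c : Finset (EuclideanSpace ℝ (Fin R × Fin L))) (hc : c.Nonempty),
      c.card ≤ K → (∫ θ, uPt θ cstar hcstar_ne ∂μ) ≤ ∫ θ, uPt θ c hc ∂μ)
    (huniq : ∀ (c : Finset (EuclideanSpace ℝ (Fin R × Fin L))) (hc : c.Nonempty),
      c.card ≤ K →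
      (∀ (c' : Finset (EuclideanSpace ℝ (Fin R × Fin L))) (hc' : c'.Nonempty),
        c'.card ≤ K → (∫ θ, uPt θ c hc ∂μ) ≤ ∫ θ, uPt θ c' hc' ∂μ) →
      c = cstar)
    -- separation: inf over card ≤ K is strictly below inf over card < K
    (hsep : (∫ θ, uPt θ cstar hcstar_ne ∂μ) <
      sInf {x : ℝ | ∃ (c : Finset (EuclideanSpace ℝ (Fin R × Fin L))) (hc : c.Nonempty),
        c.card < K ∧ x = ∫ θ, uPt θ c hc ∂μ})
    -- increasing sequence of convex compact sets covering the whole space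
    (M : ℕ → Set (EuclideanSpace ℝ (Fin R × Fin L)))
    (hMmono : Monotone M) (hMconv : ∀ n, Convex ℝ (M n)) (hMcomp : ∀ n, IsCompact (M n))
    (hMcover : (⋃ n, M n) = Set.univ)
    -- cⁿ minimizes the empirical objective over sets of ≤ K points inside M_n
    (cn : ℕ → Ω → Finset (EuclideanSpace ℝ (Fin R × Fin L)))
    (hcn_ne : ∀ n ω, (cn n ω).Nonempty)
    (hcn_card : ∀ n ω, (cn n ω).card ≤ K)
    (hcn_sub : ∀ n ω, ↑(cn n ω) ⊆ M n)
    (hcn_min : ∀ n ω (c : Finset (EuclideanSpace ℝ (Fin R × Fin L))) (hc : c.Nonempty),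
      c.card ≤ K → ↑c ⊆ M n →
      (∑ i ∈ Finset.range n, uPt (Θ i ω) (cn n ω) (hcn_ne n ω)) / n ≤
        (∑ i ∈ Finset.range n, uPt (Θ i ω) c hc) / n) :
    ∀ᵐ ω ∂P, Tendsto (fun n => hausdorffDist (↑(cn n ω) : Set (EuclideanSpace ℝ (Fin R × Fin L))) ↑cstar)
      atTop (nhds 0) :=
  kmeans_strong_consistency_general R L K P μ Θ hmeas hindep hlaw hint cstar hcstar_ne hcstar_card
    hmin huniq hsep M hMmono hMcover cn hcn_ne hcn_card hcn_min
end

section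
/- Let μ be a probability measure on the space of R×L real matrices with ∫‖Θ‖_F μ(dΘ) < ∞, let K ≥ 1, and let M be a nonempty compact subset of ℝ^{R×L}. Then the function u(c) = ∫ u(Θ, c) μ(dΘ) attains its infimum over the collection of nonempty subsets c of M with cardinality at most K; that is, there exists a nonempty set c* ⊆ M with card(c*) ≤ K such that u(c*) ≤ u(c) for every nonempty c ⊆ M with card(c) ≤ K. -/
/-! A nonempty set of at most `K` points of `M` is the image of a map `Fin K → M`, so it suffices
to minimize `f ↦ ∫ min_i ‖θ - f i‖ dμ` over the compact set `M^K`. That function is continuous,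
even 1-Lipschitz, because each `f ↦ min_i ‖θ - f i‖` is 1-Lipschitz and `μ` has mass one. -/

open MeasureTheory

open Finset

theorem Finset.exists_image_univ_eq_of_card_le {α ι : Type*} [DecidableEq α] [Fintype ι]
    {c : Finset α} (hc : c.Nonempty) (hcard : c.card ≤ Fintype.card ι) :
    ∃ f : ι → α, univ.image f = c := by
  have : Nonempty c := hc.to_subtype
  obtain ⟨e⟩ := Function.Embedding.nonempty_of_card_le (α := c) (β := ι) (by simpa using hcard)
  refine ⟨(↑) ∘ Function.invFun e, ?_⟩
  rw [← image_image, image_univ_of_surjective (Function.invFun_surjective e.injective)]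
  simp

theorem LipschitzWith.finset_inf' {X ι : Type*} [PseudoMetricSpace X] {K : NNReal} {s : Finset ι}
    (hs : s.Nonempty) {F : ι → X → ℝ} (hF : ∀ i ∈ s, LipschitzWith K (F i)) :
    LipschitzWith K fun x => s.inf' hs fun i => F i x := by
  refine LipschitzWith.of_le_add_mul K fun x y => ?_
  obtain ⟨i, hi, hmin⟩ := s.exists_mem_eq_inf' hs fun i => F i y
  rw [hmin]
  exact (s.inf'_le _ hi).trans ((hF i hi).le_add_mul x y)

theorem LipschitzWith.integral {X α G : Type*} [PseudoMetricSpace X] [MeasurableSpace α]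
    [NormedAddCommGroup G] [NormedSpace ℝ G] {μ : Measure α} [IsProbabilityMeasure μ]
    {K : NNReal} {F : X → α → G} (hF : ∀ x, Integrable (F x) μ)
    (hL : ∀ a, LipschitzWith K fun x => F x a) :
    LipschitzWith K fun x => ∫ a, F x a ∂μ := by
  refine LipschitzWith.of_dist_le_mul fun x y => ?_
  rw [dist_eq_norm, ← integral_sub (hF x) (hF y)]
  have hpt : ∀ a, ‖F x a - F y a‖ ≤ K * dist x y := fun a =>
    dist_eq_norm (F x a) (F y a) ▸ (hL a).dist_le_mul x y
  simpa using norm_integral_le_of_norm_le_const (μ := μ) (Filter.Eventually.of_forall hpt)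

section uPt

variable {E : Type*} [NormedAddCommGroup E]

theorem continuous_uPt (c : Finset E) (hc : c.Nonempty) : Continuous fun θ : E => uPt θ c hc :=
  Continuous.finset_inf'_apply hc fun _ _ => (continuous_id.sub continuous_const).norm

theorem uPt_nonneg (θ : E) (c : Finset E) (hc : c.Nonempty) : 0 ≤ uPt θ c hc :=
  le_inf' hc _ fun _ _ => norm_nonneg _

theorem uPt_le_norm_sub (θ : E) {c : Finset E} (hc : c.Nonempty) {a : E} (ha : a ∈ c) :
    uPt θ c hc ≤ ‖θ - a‖ :=
  inf'_le _ ha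

theorem integrable_uPt [MeasurableSpace E] [OpensMeasurableSpace E] {μ : Measure E}
    [IsFiniteMeasure μ] (hint : Integrable (fun θ => ‖θ‖) μ) (c : Finset E) (hc : c.Nonempty) :
    Integrable (fun θ => uPt θ c hc) μ := by
  obtain ⟨a, ha⟩ := id hc
  refine (hint.add (integrable_const ‖a‖)).mono' (continuous_uPt c _).aestronglyMeasurable
    (Filter.Eventually.of_forall fun θ => ?_)
  rw [Real.norm_of_nonneg (uPt_nonneg θ c _)]
  exact (uPt_le_norm_sub θ _ ha).trans (norm_sub_le θ a)

theorem uPt_image [DecidableEq E] {ι : Type*} (θ : E) (f : ι → E) {s : Finset ι}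
    (hs : s.Nonempty) : uPt θ (s.image f) (hs.image f) = s.inf' hs fun i => ‖θ - f i‖ :=
  inf'_image ..

theorem lipschitzWith_uPt_image_univ [DecidableEq E] {ι : Type*} [Fintype ι] [Nonempty ι]
    (θ : E) : LipschitzWith 1 fun f : ι → E => uPt θ (univ.image f) (univ_nonempty.image f) := by
  rw [funext fun f : ι → E => uPt_image θ f univ_nonempty]
  refine LipschitzWith.finset_inf' _ fun i _ => ?_
  simpa [Function.comp_def, dist_eq_norm] using
    (LipschitzWith.dist_right θ).comp (LipschitzWith.eval (α := fun _ : ι => E) i)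

end uPt

/-- if μ is a probability measure on the R×L matrices with `∫‖Θ‖_F dμ < ∞`,
K ≥ 1, and M is a nonempty compact subset of ℝ^{R×L}, then `u(c) = ∫ u(Θ, c) dμ` attains
its infimum over the nonempty subsets c of M of cardinality at most K. -/
theorem exists_population_minimizer (R L K : ℕ) (hK : 1 ≤ K)
    (μ : Measure (EuclideanSpace ℝ (Fin R × Fin L))) [IsProbabilityMeasure μ]
    (hint : Integrable (fun θ => ‖θ‖) μ)
    (M : Set (EuclideanSpace ℝ (Fin R × Fin L))) (hMne : M.Nonempty)
    (hMcomp : IsCompact M) :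
    ∃ (cstar : Finset (EuclideanSpace ℝ (Fin R × Fin L))) (hcstar : cstar.Nonempty),
      ↑cstar ⊆ M ∧ cstar.card ≤ K ∧
      ∀ (c : Finset (EuclideanSpace ℝ (Fin R × Fin L))) (hc : c.Nonempty),
        ↑c ⊆ M → c.card ≤ K →
        (∫ θ, uPt θ cstar hcstar ∂μ) ≤ ∫ θ, uPt θ c hc ∂μ := by
  classical
  have : Nonempty (Fin K) := ⟨⟨0, hK⟩⟩
  have hcont : Continuous fun f : Fin K → EuclideanSpace ℝ (Fin R × Fin L) =>
      ∫ θ, uPt θ (univ.image f) (univ_nonempty.image f) ∂μ :=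
    (LipschitzWith.integral (fun _ => integrable_uPt hint _ _)
      lipschitzWith_uPt_image_univ).continuous
  obtain ⟨fstar, hfstar, hmin⟩ := (isCompact_univ_pi fun _ : Fin K => hMcomp).exists_isMinOn
    (Set.univ_pi_nonempty_iff.2 fun _ => hMne) hcont.continuousOn
  refine ⟨univ.image fstar, univ_nonempty.image fstar, ?_, ?_, ?_⟩
  · simpa [Set.range_subset_iff] using hfstar
  · simpa using card_image_le (s := univ) (f := fstar)
  · intro c hc hcM hcK
    obtain ⟨f, rfl⟩ := c.exists_image_univ_eq_of_card_le (ι := Fin K) hc (by simpa using hcK)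
    exact hmin fun i _ => hcM (mem_image_of_mem f (mem_univ i))
end

section
/- Let h be a probability measure on a measurable space 𝒳, let φ_1, …, φ_p : 𝒳 → ℝ be bounded, measurable, and linearly independent as elements of L²(h), and let g : 𝒳 → ℝ be bounded and measurable. Let (X_j)_{j≥1} be i.i.d. with distribution h, and let (ε_j)_{j≥1} be i.i.d. real random variables, independent of (X_j), with mean 0 and finite variance σ². For each m, let θ̂_m ∈ ℝ^p be a minimizer of θ ↦ Σ_{j=1}^m ( g(X_j) + ε_j − Σ_{k=1}^p θ_k φ_k(X_j) )². Let θ* ∈ ℝ^p be the (unique) coefficient vector of the orthogonal projection of g onto span{φ_1, …, φ_p} in L²(h). Then, almost surely, θ̂_m → θ* as m → ∞ (in particular, ‖Σ_k (θ̂_m)_k φ_k − Σ_k θ*_k φ_k‖_{L²(h)} → 0 almost surely). -/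
/-!
Both the estimate and the target solve normal equations: `Ĝ_m θ̂_m = b̂_m` with
`Ĝ_m = m⁻¹ ∑_{j<m} φ(X_j) φ(X_j)ᵀ` and `b̂_m = m⁻¹ ∑_{j<m} (g(X_j) + ε_j) φ(X_j)`, and `G θ* = b`
with `G` the Gram matrix of the `φ_k` in `L²(h)` and `b_k = ∫ g φ_k dh`; each comes from the
vanishing of the first-order term of a quadratic objective at its minimiser. The strong law of
large numbers in Etemadi's pairwise form, applied to the i.i.d. pairs `(X_j, ε_j)`, gives
`Ĝ_m → G` and `b̂_m → b` almost surely, the noise contributing `E[ε] E[φ(X)] = 0`. Linear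
independence makes `G` invertible, and inversion is continuous at invertible matrices, so
`θ̂_m = Ĝ_m⁻¹ b̂_m → G⁻¹ b = θ*`.
-/

open MeasureTheory ProbabilityTheory Filter

open Matrix Finset Topology

namespace Matrix

theorem isSymm_sum_vecMulVec {n β : Type*} (s : Finset β) (v : β → n → ℝ) :
    (∑ j ∈ s, vecMulVec (v j) (v j)).IsSymm := by
  simp [IsSymm, transpose_sum, transpose_vecMulVec]

variable {n : Type*} [Fintype n]

theorem IsSymm.dotProduct_mulVec_comm {A : Matrix n n ℝ} (hA : A.IsSymm) (v w : n → ℝ) :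
    v ⬝ᵥ (A *ᵥ w) = w ⬝ᵥ (A *ᵥ v) := by
  rw [dotProduct_mulVec, dotProduct_comm, ← mulVec_transpose, hA.eq]

theorem IsSymm.mulVec_eq_of_forall_le {A : Matrix n n ℝ} (hA : A.IsSymm) {b θ : n → ℝ}
    (hθ : ∀ a, θ ⬝ᵥ (A *ᵥ θ) - 2 * (θ ⬝ᵥ b) ≤ a ⬝ᵥ (A *ᵥ a) - 2 * (a ⬝ᵥ b)) :
    A *ᵥ θ = b := by
  set r := A *ᵥ θ - b
  have hline : ∀ t : ℝ, 0 ≤ (r ⬝ᵥ (A *ᵥ r)) * (t * t) + 2 * (r ⬝ᵥ r) * t + 0 := fun t => by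
    have := hθ (θ + t • r)
    simp only [mulVec_add, mulVec_smul, dotProduct_add, add_dotProduct, dotProduct_smul,
      smul_dotProduct, smul_eq_mul, hA.dotProduct_mulVec_comm θ r] at this
    simp only [r, dotProduct_sub] at this ⊢
    linarith
  have hrr : r ⬝ᵥ r = 0 := by
    have := discrim_le_zero hline
    rw [discrim] at this
    nlinarith
  exact sub_eq_zero.1 (dotProduct_self_eq_zero.1 hrr)

theorem dotProduct_vecMulVec_mulVec (a u v w : n → ℝ) :
    a ⬝ᵥ (vecMulVec u v *ᵥ w) = (a ⬝ᵥ u) * (v ⬝ᵥ w) := by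
  rw [vecMulVec_mulVec, op_smul_eq_smul, dotProduct_smul, smul_eq_mul, mul_comm]

theorem sum_sq_sub_dotProduct {β : Type*} (s : Finset β) (y : β → ℝ) (v : β → n → ℝ)
    (a : n → ℝ) :
    ∑ j ∈ s, (y j - a ⬝ᵥ v j) ^ 2 = ∑ j ∈ s, y j ^ 2 +
      (a ⬝ᵥ ((∑ j ∈ s, vecMulVec (v j) (v j)) *ᵥ a) - 2 * (a ⬝ᵥ ∑ j ∈ s, y j • v j)) := by
  simp only [sum_mulVec, dotProduct_sum, dotProduct_vecMulVec_mulVec, dotProduct_smul,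
    smul_eq_mul, mul_sum, ← sum_sub_distrib, ← sum_add_distrib]
  refine sum_congr rfl fun j _ => ?_
  rw [dotProduct_comm (v j) a]
  ring

theorem sum_vecMulVec_mulVec_eq_of_forall_le {β : Type*} (s : Finset β) (y : β → ℝ)
    (v : β → n → ℝ) {θ : n → ℝ}
    (hθ : ∀ a, ∑ j ∈ s, (y j - θ ⬝ᵥ v j) ^ 2 ≤ ∑ j ∈ s, (y j - a ⬝ᵥ v j) ^ 2) :
    (∑ j ∈ s, vecMulVec (v j) (v j)) *ᵥ θ = ∑ j ∈ s, y j • v j :=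
  (isSymm_sum_vecMulVec s v).mulVec_eq_of_forall_le fun a => by
    simpa only [sum_sq_sub_dotProduct, add_le_add_iff_left] using hθ a

theorem tendsto_of_mulVec_eq [DecidableEq n] {β 𝕜 : Type*} [NormedField 𝕜] {l : Filter β}
    {A : β → Matrix n n 𝕜} {A₀ : Matrix n n 𝕜} {b x : β → n → 𝕜} {b₀ x₀ : n → 𝕜}
    (hA : Tendsto A l (𝓝 A₀)) (hb : Tendsto b l (𝓝 b₀)) (hA₀ : A₀.det ≠ 0)
    (hx : ∀ᶠ i in l, A i *ᵥ x i = b i) (hx₀ : A₀ *ᵥ x₀ = b₀) :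
    Tendsto x l (𝓝 x₀) := by
  have solve {M : Matrix n n 𝕜} (hM : M.det ≠ 0) (v : n → 𝕜) : M⁻¹ *ᵥ (M *ᵥ v) = v := by
    rw [mulVec_mulVec, nonsing_inv_mul _ hM.isUnit, one_mulVec]
  have hinv : Tendsto (fun i => (A i)⁻¹) l (𝓝 A₀⁻¹) :=
    (continuousAt_matrix_inv A₀ (by
      rw [Ring.inverse_eq_inv']; exact continuousAt_inv₀ hA₀)).tendsto.comp hA
  have hsolve : Tendsto (fun i => (A i)⁻¹ *ᵥ b i) l (𝓝 (A₀⁻¹ *ᵥ b₀)) :=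
    ((continuous_fst.matrix_mulVec continuous_snd).tendsto _).comp (hinv.prodMk_nhds hb)
  have hdet : ∀ᶠ i in l, (A i).det ≠ 0 :=
    ((continuous_id.matrix_det.tendsto A₀).comp hA).eventually_ne hA₀
  rw [← hx₀, solve hA₀] at hsolve
  refine hsolve.congr' ?_
  filter_upwards [hx, hdet] with i hxi hdeti
  rw [← hxi, solve hdeti]

end Matrix

section Gram

variable {α ι : Type*} [MeasurableSpace α] [Fintype ι] {μ : Measure α} {φ : ι → α → ℝ}

noncomputable def gramMatrix (μ : Measure α) (φ : ι → α → ℝ) : Matrix ι ι ℝ :=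
  Matrix.of fun k l => ∫ x, φ k x * φ l x ∂μ

omit [Fintype ι] in
theorem isSymm_gramMatrix : (gramMatrix μ φ).IsSymm := by
  ext k l
  simp only [gramMatrix, transpose_apply, of_apply, mul_comm]

theorem integral_mul_sum_mul {y : α → ℝ} (hy : MemLp y 2 μ) (hφ : ∀ k, MemLp (φ k) 2 μ)
    (a : ι → ℝ) :
    ∫ x, y x * ∑ k, a k * φ k x ∂μ = a ⬝ᵥ fun k => ∫ x, y x * φ k x ∂μ := by
  simp only [mul_sum, mul_left_comm (y _), dotProduct]
  have hint (k : ι) : Integrable (fun x => a k * (y x * φ k x)) μ :=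
    (hy.integrable_mul (hφ k)).const_mul (a k)
  simp only [integral_finsetSum _ fun k _ => hint k, integral_const_mul]

theorem memLp_sum_mul (hφ : ∀ k, MemLp (φ k) 2 μ) (a : ι → ℝ) :
    MemLp (fun x => ∑ k, a k * φ k x) 2 μ :=
  memLp_finsetSum _ fun k _ => (hφ k).const_mul (a k)

theorem integral_sum_mul_sq (hφ : ∀ k, MemLp (φ k) 2 μ) (a : ι → ℝ) :
    ∫ x, (∑ k, a k * φ k x) ^ 2 ∂μ = a ⬝ᵥ (gramMatrix μ φ *ᵥ a) := by
  simp only [sq, integral_mul_sum_mul (memLp_sum_mul hφ a) hφ]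
  congr 1 with l
  simp only [mul_comm _ (φ l _), integral_mul_sum_mul (hφ l) hφ, mulVec, dotProduct_comm a]
  rfl

theorem integral_sub_sum_mul_sq {y : α → ℝ} (hy : MemLp y 2 μ) (hφ : ∀ k, MemLp (φ k) 2 μ)
    (a : ι → ℝ) :
    ∫ x, (y x - ∑ k, a k * φ k x) ^ 2 ∂μ = ∫ x, y x ^ 2 ∂μ +
      (a ⬝ᵥ (gramMatrix μ φ *ᵥ a) - 2 * (a ⬝ᵥ fun k => ∫ x, y x * φ k x ∂μ)) := by
  have hs := memLp_sum_mul hφ a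
  have hys : Integrable (fun x => 2 * (y x * ∑ k, a k * φ k x)) μ :=
    (hy.integrable_mul hs).const_mul 2
  have hd : Integrable (fun x => (∑ k, a k * φ k x) ^ 2 - 2 * (y x * ∑ k, a k * φ k x)) μ :=
    hs.integrable_sq.sub hys
  calc ∫ x, (y x - ∑ k, a k * φ k x) ^ 2 ∂μ
      = ∫ x, y x ^ 2 + ((∑ k, a k * φ k x) ^ 2 - 2 * (y x * ∑ k, a k * φ k x)) ∂μ := by
        congr 1 with x; ring
    _ = _ := by
      rw [integral_add hy.integrable_sq hd, integral_sub hs.integrable_sq hys,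
        integral_const_mul, integral_sum_mul_sq hφ, integral_mul_sum_mul hy hφ]

theorem gramMatrix_mulVec_eq_of_forall_le {y : α → ℝ} (hy : MemLp y 2 μ)
    (hφ : ∀ k, MemLp (φ k) 2 μ) {θ : ι → ℝ}
    (hθ : ∀ a : ι → ℝ, ∫ x, (y x - ∑ k, θ k * φ k x) ^ 2 ∂μ ≤
      ∫ x, (y x - ∑ k, a k * φ k x) ^ 2 ∂μ) :
    gramMatrix μ φ *ᵥ θ = fun k => ∫ x, y x * φ k x ∂μ :=
  isSymm_gramMatrix.mulVec_eq_of_forall_le fun a => by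
    simpa only [integral_sub_sum_mul_sq hy hφ, add_le_add_iff_left] using hθ a

theorem det_gramMatrix_ne_zero [DecidableEq ι] (hφ : ∀ k, MemLp (φ k) 2 μ)
    (hli : ∀ a : ι → ℝ, (∀ᵐ x ∂μ, ∑ k, a k * φ k x = 0) → a = 0) :
    (gramMatrix μ φ).det ≠ 0 := by
  intro hdet
  obtain ⟨a, ha, hGa⟩ := exists_mulVec_eq_zero_iff.2 hdet
  have hsq : ∫ x, (∑ k, a k * φ k x) ^ 2 ∂μ = 0 := by
    rw [integral_sum_mul_sq hφ, hGa, dotProduct_zero]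
  have hae := (integral_eq_zero_iff_of_nonneg (fun x => sq_nonneg _)
    (memLp_sum_mul hφ a).integrable_sq).1 hsq
  exact ha (hli a (hae.mono fun x hx => pow_eq_zero_iff two_ne_zero |>.1 hx))

end Gram

theorem MeasureTheory.measurePreserving_prodProdProdComm {α β γ δ : Type*} [MeasurableSpace α]
    [MeasurableSpace β] [MeasurableSpace γ] [MeasurableSpace δ] (μa : Measure α)
    (μb : Measure β) (μc : Measure γ) (μd : Measure δ) [SFinite μa] [SFinite μb] [SFinite μc]
    [SFinite μd] :
    MeasurePreserving (Equiv.prodProdProdComm α β γ δ) ((μa.prod μb).prod (μc.prod μd))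
      ((μa.prod μc).prod (μb.prod μd)) := by
  have hmid : MeasurePreserving (fun z : β × γ × δ => (z.2.1, z.1, z.2.2))
      (μb.prod (μc.prod μd)) (μc.prod (μb.prod μd)) :=
    (measurePreserving_prodAssoc μc μb μd).comp
      (((Measure.measurePreserving_swap).prod (MeasurePreserving.id μd)).comp
        (measurePreserving_prodAssoc μb μc μd).symm)
  exact ((measurePreserving_prodAssoc μa μc (μb.prod μd)).symm.comp
    (((MeasurePreserving.id μa).prod hmid).comp (measurePreserving_prodAssoc μa μb _)))

theorem ProbabilityTheory.IndepFun.prodMk_prodMk_of_prodMk {Ω α β γ δ : Type*}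
    [MeasurableSpace Ω] [MeasurableSpace α] [MeasurableSpace β] [MeasurableSpace γ]
    [MeasurableSpace δ] {μ : Measure Ω} [IsFiniteMeasure μ] {A : Ω → α} {B : Ω → β}
    {C : Ω → γ} {D : Ω → δ} (hA : Measurable A) (hB : Measurable B) (hC : Measurable C)
    (hD : Measurable D) (hAB : A ⟂ᵢ[μ] B) (hCD : C ⟂ᵢ[μ] D)
    (h : (fun ω => (A ω, B ω)) ⟂ᵢ[μ] (fun ω => (C ω, D ω))) :
    (fun ω => (A ω, C ω)) ⟂ᵢ[μ] (fun ω => (B ω, D ω)) := by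
  have hAC : A ⟂ᵢ[μ] C := h.comp measurable_fst measurable_fst
  have hBD : B ⟂ᵢ[μ] D := h.comp measurable_snd measurable_snd
  have hσ := measurePreserving_prodProdProdComm (μ.map A) (μ.map B) (μ.map C) (μ.map D)
  rw [indepFun_iff_map_prod_eq_prod_map_map (by fun_prop) (by fun_prop),
    hAC.map_prod_eq_prod_map_map hA.aemeasurable hC.aemeasurable,
    hBD.map_prod_eq_prod_map_map hB.aemeasurable hD.aemeasurable,
    ← hσ.map_eq,
    ← hAB.map_prod_eq_prod_map_map hA.aemeasurable hB.aemeasurable,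
    ← hCD.map_prod_eq_prod_map_map hC.aemeasurable hD.aemeasurable,
    ← h.map_prod_eq_prod_map_map (by fun_prop) (by fun_prop),
    Measure.map_map hσ.measurable (by fun_prop)]
  rfl

section StrongLaw

variable {Ω E : Type*} [MeasurableSpace Ω] {P : Measure Ω}
  [NormedAddCommGroup E] [NormedSpace ℝ E] [CompleteSpace E] [MeasurableSpace E] [BorelSpace E]
  [SecondCountableTopology E]

theorem strong_law_comp_of_map_eq {𝒵 : Type*} [MeasurableSpace 𝒵] {μ : Measure 𝒵}
    {Z : ℕ → Ω → 𝒵} (hZ : ∀ j, Measurable (Z j)) (hindep : Pairwise fun i j => Z i ⟂ᵢ[P] Z j)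
    (hlaw : ∀ j, P.map (Z j) = μ) {f : 𝒵 → E} (hf : Measurable f) (hfμ : Integrable f μ) :
    ∀ᵐ ω ∂P, Tendsto (fun n : ℕ => (n : ℝ)⁻¹ • ∑ j ∈ range n, f (Z j ω)) atTop
      (𝓝 (∫ z, f z ∂μ)) := by
  have hmean : ∫ ω, f (Z 0 ω) ∂P = ∫ z, f z ∂μ := by
    rw [← hlaw 0, integral_map (hZ 0).aemeasurable hf.aestronglyMeasurable]
  rw [← hmean]
  refine strong_law_ae (fun j ω => f (Z j ω)) ?_ (fun i j hij => (hindep hij).comp hf hf)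
    fun j => (IdentDistrib.mk (hZ j).aemeasurable (hZ 0).aemeasurable (by rw [hlaw, hlaw])).comp hf
  rw [← hlaw 0] at hfμ
  exact hfμ.comp_measurable (hZ 0)

theorem strong_law_prodMk [IsProbabilityMeasure P] {𝒳 𝒴 : Type*} [MeasurableSpace 𝒳]
    [MeasurableSpace 𝒴] {μ : Measure 𝒳} {ν : Measure 𝒴} {X : ℕ → Ω → 𝒳} {Y : ℕ → Ω → 𝒴}
    (hX : ∀ j, Measurable (X j)) (hY : ∀ j, Measurable (Y j))
    (hXi : iIndepFun X P) (hYi : iIndepFun Y P) (hXlaw : ∀ j, P.map (X j) = μ)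
    (hYlaw : ∀ j, P.map (Y j) = ν)
    (hXY : (fun ω j => X j ω) ⟂ᵢ[P] (fun ω j => Y j ω))
    {f : 𝒳 × 𝒴 → E} (hf : Measurable f) (hfμ : Integrable f (μ.prod ν)) :
    ∀ᵐ ω ∂P, Tendsto (fun n : ℕ => (n : ℝ)⁻¹ • ∑ j ∈ range n, f (X j ω, Y j ω)) atTop
      (𝓝 (∫ z, f z ∂(μ.prod ν))) := by
  have hXYj (i j : ℕ) : X i ⟂ᵢ[P] Y j := hXY.comp (measurable_pi_apply i) (measurable_pi_apply j)
  refine strong_law_comp_of_map_eq (Z := fun j ω => (X j ω, Y j ω))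
    (fun j => (hX j).prodMk (hY j)) (fun i j hij => ?_) (fun j => ?_) hf hfμ
  · exact IndepFun.prodMk_prodMk_of_prodMk (hX i) (hX j) (hY i) (hY j)
      (hXi.indepFun hij) (hYi.indepFun hij)
      (hXY.comp (φ := fun x => (x i, x j)) (ψ := fun y => (y i, y j)) (by fun_prop) (by fun_prop))
  · rw [(hXYj j j).map_prod_eq_prod_map_map (hX j).aemeasurable (hY j).aemeasurable, hXlaw,
      hYlaw]

end StrongLaw

section Regression

variable {Ω 𝒳 ι : Type*} [MeasurableSpace Ω] [MeasurableSpace 𝒳] [Fintype ι] {P : Measure Ω}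
  {h : Measure 𝒳} {X : ℕ → Ω → 𝒳} {φ : ι → 𝒳 → ℝ}

theorem ae_tendsto_smul_sum_vecMulVec (hX : ∀ j, Measurable (X j)) (hXi : iIndepFun X P)
    (hXlaw : ∀ j, P.map (X j) = h) (hφ : ∀ k, Measurable (φ k)) (hφ2 : ∀ k, MemLp (φ k) 2 h) :
    ∀ᵐ ω ∂P, Tendsto (fun n : ℕ => (n : ℝ)⁻¹ • ∑ j ∈ range n,
      vecMulVec (fun k => φ k (X j ω)) (fun k => φ k (X j ω))) atTop (𝓝 (gramMatrix h φ)) := by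
  have hint (k l : ι) : Integrable (fun x => φ k x * φ l x) h := (hφ2 k).integrable_mul (hφ2 l)
  have hmean : ∫ x, (fun k l => φ k x * φ l x : ι → ι → ℝ) ∂h = gramMatrix h φ := by
    ext k l
    rw [eval_integral (fun k => integrable_pi_iff.2 (hint k)), eval_integral (hint k)]
    rfl
  have := strong_law_comp_of_map_eq hX (fun i j hij => hXi.indepFun hij) hXlaw
    (f := fun x k l => φ k x * φ l x) (by fun_prop)
    (integrable_pi_iff.2 fun k => integrable_pi_iff.2 (hint k))
  rwa [hmean] at this

theorem ae_tendsto_smul_sum_add_smul [IsProbabilityMeasure P] [IsProbabilityMeasure h]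
    {ε : ℕ → Ω → ℝ} {ν : Measure ℝ} [IsProbabilityMeasure ν]
    (hX : ∀ j, Measurable (X j)) (hε : ∀ j, Measurable (ε j)) (hXi : iIndepFun X P)
    (hεi : iIndepFun ε P) (hXlaw : ∀ j, P.map (X j) = h)
    (hεlaw : ∀ j, P.map (ε j) = ν) (hXε : (fun ω j => X j ω) ⟂ᵢ[P] (fun ω j => ε j ω))
    {g : 𝒳 → ℝ} (hg : Measurable g) (hg2 : MemLp g 2 h) (hφ : ∀ k, Measurable (φ k))
    (hφ2 : ∀ k, MemLp (φ k) 2 h) (hν : Integrable (fun e => e) ν) (hν0 : ∫ e, e ∂ν = 0) :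
    ∀ᵐ ω ∂P, Tendsto (fun n : ℕ => (n : ℝ)⁻¹ • ∑ j ∈ range n,
      (g (X j ω) + ε j ω) • fun k => φ k (X j ω)) atTop (𝓝 fun k => ∫ x, g x * φ k x ∂h) := by
  have hsplit (k : ι) (z : 𝒳 × ℝ) :
      (g z.1 + z.2) * φ k z.1 = g z.1 * φ k z.1 + φ k z.1 * z.2 := by ring
  have hsignal (k : ι) : Integrable (fun z : 𝒳 × ℝ => g z.1 * φ k z.1) (h.prod ν) :=
    (hg2.integrable_mul (hφ2 k)).comp_fst ν
  have hnoise (k : ι) : Integrable (fun z : 𝒳 × ℝ => φ k z.1 * z.2) (h.prod ν) :=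
    ((hφ2 k).integrable one_le_two).mul_prod hν
  have hint (k : ι) : Integrable (fun z : 𝒳 × ℝ => (g z.1 + z.2) * φ k z.1) (h.prod ν) :=
    ((hsignal k).add (hnoise k)).congr (.of_forall fun z => (hsplit k z).symm)
  have hmean : ∫ z : 𝒳 × ℝ, ((g z.1 + z.2) • fun k => φ k z.1 : ι → ℝ) ∂(h.prod ν) =
      fun k => ∫ x, g x * φ k x ∂h := by
    ext k
    rw [eval_integral (f := fun z : 𝒳 × ℝ => (g z.1 + z.2) • fun k => φ k z.1) hint]
    simp only [Pi.smul_apply, smul_eq_mul, hsplit]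
    rw [integral_add (hsignal k) (hnoise k), integral_fun_fst (fun x => g x * φ k x),
      integral_prod_mul (φ k) (fun e => e), hν0]
    simp
  rw [← hmean]
  exact strong_law_prodMk hX hε hXi hεi hXlaw hεlaw hXε (by fun_prop) (integrable_pi_iff.2 hint)

end Regression

theorem least_squares_strong_consistency_general {𝒳 : Type*} [MeasurableSpace 𝒳]
    {Ω : Type*} [MeasurableSpace Ω] (P : Measure Ω) [IsProbabilityMeasure P]
    (h : Measure 𝒳) [IsProbabilityMeasure h]
    (p : ℕ) (φ : Fin p → 𝒳 → ℝ)
    (hφmeas : ∀ k, Measurable (φ k))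
    (hφbdd : ∀ k, ∃ C : ℝ, ∀ x, |φ k x| ≤ C)
    (hli : ∀ a : Fin p → ℝ, (∀ᵐ x ∂h, ∑ k, a k * φ k x = 0) → a = 0)
    (g : 𝒳 → ℝ) (hgmeas : Measurable g) (hgbdd : ∃ C : ℝ, ∀ x, |g x| ≤ C)
    -- the design points (X_j), i.i.d. with distribution h
    (X : ℕ → Ω → 𝒳) (hXmeas : ∀ j, Measurable (X j))
    (hXindep : iIndepFun X P)
    (hXlaw : ∀ j, Measure.map (X j) P = h)
    -- the errors (ε_j), i.i.d. with mean 0 and finite variance σ²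
    (ε : ℕ → Ω → ℝ) (hεmeas : ∀ j, Measurable (ε j))
    (hεindep : iIndepFun ε P)
    (Pe : Measure ℝ) [IsProbabilityMeasure Pe]
    (hεlaw : ∀ j, Measure.map (ε j) P = Pe)
    (hmean : ∫ e, e ∂Pe = 0) (hmoment : Integrable (fun e : ℝ => e ^ 2) Pe)
    -- the error sequence is independent of the design sequence
    (hXε : IndepFun (fun ω => fun j => X j ω) (fun ω => fun j => ε j ω) P)
    -- θ̂_m minimizes the residual sum of squares over the first m observations
    (θhat : ℕ → Ω → Fin p → ℝ)
    (hθhat : ∀ m ω (a : Fin p → ℝ),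
      ∑ j ∈ Finset.range m, (g (X j ω) + ε j ω - ∑ k, θhat m ω k * φ k (X j ω)) ^ 2 ≤
        ∑ j ∈ Finset.range m, (g (X j ω) + ε j ω - ∑ k, a k * φ k (X j ω)) ^ 2)
    -- θ* is the coefficient vector of the orthogonal projection of g onto span{φ_k} in L²(h)
    (θstar : Fin p → ℝ)
    (hθstar : ∀ a : Fin p → ℝ,
      (∫ x, (g x - ∑ k, θstar k * φ k x) ^ 2 ∂h) ≤ ∫ x, (g x - ∑ k, a k * φ k x) ^ 2 ∂h) :
    ∀ᵐ ω ∂P, Tendsto (fun m => θhat m ω) atTop (nhds θstar) := by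
  have hφ2 (k : Fin p) : MemLp (φ k) 2 h := by
    obtain ⟨C, hC⟩ := hφbdd k
    exact .of_bound (hφmeas k).aestronglyMeasurable C (.of_forall hC)
  obtain ⟨Cg, hCg⟩ := hgbdd
  have hg2 : MemLp g 2 h := .of_bound hgmeas.aestronglyMeasurable Cg (.of_forall hCg)
  have hε1 : Integrable (fun e : ℝ => e) Pe :=
    ((memLp_two_iff_integrable_sq measurable_id.aestronglyMeasurable).2 hmoment).integrable
      one_le_two
  filter_upwards [ae_tendsto_smul_sum_vecMulVec hXmeas hXindep hXlaw hφmeas hφ2,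
    ae_tendsto_smul_sum_add_smul hXmeas hεmeas hXindep hεindep hXlaw hεlaw hXε hgmeas hg2
      hφmeas hφ2 hε1 hmean] with ω hgram hcross
  refine tendsto_of_mulVec_eq hgram hcross (det_gramMatrix_ne_zero hφ2 hli)
    (.of_forall fun m => ?_) (gramMatrix_mulVec_eq_of_forall_le hg2 hφ2 hθstar)
  rw [smul_mulVec, sum_vecMulVec_mulVec_eq_of_forall_le _ _ _ (hθhat m ω)]

/-- strong consistency of the least-squares coefficient estimator, the
paper's Lemma 2 for a general linearly independent system of bounded basis functions:
φ_1, …, φ_p bounded measurable and linearly independent in L²(h); g bounded measurable;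
(X_j) i.i.d. with law h; (ε_j) i.i.d. with mean 0 and finite variance σ², independent of
(X_j); θ̂_m a least-squares minimizer of
`θ ↦ Σ_{j=1}^m (g(X_j) + ε_j − Σ_k θ_k φ_k(X_j))²`; θ* the coefficient vector of the
orthogonal projection of g onto span{φ_1, …, φ_p} in L²(h) (characterized as the minimizer
of the population squared L²(h)-error). Then almost surely θ̂_m → θ* as m → ∞. -/
theorem least_squares_strong_consistency {𝒳 : Type*} [MeasurableSpace 𝒳]
    {Ω : Type*} [MeasurableSpace Ω] (P : Measure Ω) [IsProbabilityMeasure P]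
    (h : Measure 𝒳) [IsProbabilityMeasure h]
    (p : ℕ) (φ : Fin p → 𝒳 → ℝ)
    (hφmeas : ∀ k, Measurable (φ k))
    (hφbdd : ∀ k, ∃ C : ℝ, ∀ x, |φ k x| ≤ C)
    (hli : ∀ a : Fin p → ℝ, (∀ᵐ x ∂h, ∑ k, a k * φ k x = 0) → a = 0)
    (g : 𝒳 → ℝ) (hgmeas : Measurable g) (hgbdd : ∃ C : ℝ, ∀ x, |g x| ≤ C)
    -- the design points (X_j), i.i.d. with distribution h
    (X : ℕ → Ω → 𝒳) (hXmeas : ∀ j, Measurable (X j))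
    (hXindep : iIndepFun X P)
    (hXlaw : ∀ j, Measure.map (X j) P = h)
    -- the errors (ε_j), i.i.d. with mean 0 and finite variance σ²
    (ε : ℕ → Ω → ℝ) (hεmeas : ∀ j, Measurable (ε j))
    (hεindep : iIndepFun ε P)
    (Pe : Measure ℝ) [IsProbabilityMeasure Pe]
    (hεlaw : ∀ j, Measure.map (ε j) P = Pe)
    (σ : ℝ) (hmean : ∫ e, e ∂Pe = 0) (hmoment : Integrable (fun e : ℝ => e ^ 2) Pe)
    (hvar : ∫ e, e ^ 2 ∂Pe = σ ^ 2)
    -- the error sequence is independent of the design sequence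
    (hXε : IndepFun (fun ω => fun j => X j ω) (fun ω => fun j => ε j ω) P)
    -- θ̂_m minimizes the residual sum of squares over the first m observations
    (θhat : ℕ → Ω → Fin p → ℝ)
    (hθhat : ∀ m ω (a : Fin p → ℝ),
      ∑ j ∈ Finset.range m, (g (X j ω) + ε j ω - ∑ k, θhat m ω k * φ k (X j ω)) ^ 2 ≤
        ∑ j ∈ Finset.range m, (g (X j ω) + ε j ω - ∑ k, a k * φ k (X j ω)) ^ 2)
    -- θ* is the coefficient vector of the orthogonal projection of g onto span{φ_k} in L²(h)
    (θstar : Fin p → ℝ)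
    (hθstar : ∀ a : Fin p → ℝ,
      (∫ x, (g x - ∑ k, θstar k * φ k x) ^ 2 ∂h) ≤ ∫ x, (g x - ∑ k, a k * φ k x) ^ 2 ∂h) :
    ∀ᵐ ω ∂P, Tendsto (fun m => θhat m ω) atTop (nhds θstar) :=
  least_squares_strong_consistency_general P h p φ hφmeas hφbdd hli g hgmeas hgbdd X hXmeas hXindep
    hXlaw ε hεmeas hεindep Pe hεlaw hmean hmoment hXε θhat hθhat θstar hθstar
end
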